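/- arXiv:2402.13085 — 2 statements merged into one kernel-verified Lean document; each statement's English description precedes it below -/
import Mathlib

section
/- For every rational ω-expression T, the lasso language ⟦h(T)⟧_∘ is closed under γ-expansion: if (u',v') →_γ (u,v) and (u,v) ∈ ⟦h(T)⟧_∘ then (u',v') ∈ ⟦h(T)⟧_∘. -/
/-- Rational expressions over alphabet `A`. -/
inductive RExp (A : Type) : Type
  | zero | one
  | char (a : A)
  | add (t r : RExp A)
  | mul (t r : RExp A)
  | star (t : RExp A)

/-- Language semantics of rational expressions. -/
def RExp.lang {A : Type} : RExp A → Language A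
  | .zero => 0
  | .one => 1
  | .char a => {[a]}
  | .add t r => t.lang + r.lang
  | .mul t r => t.lang * r.lang
  | .star t => KStar.kstar t.lang

/-- Empty word property, computed syntactically. -/
def RExp.eps {A : Type} : RExp A → Bool
  | .zero => false | .one => true | .char _ => false
  | .add t r => t.eps || r.eps
  | .mul t r => t.eps && r.eps
  | .star _ => true

/-- The Iverson bracket `[t ∈ N]` as a rational expression. -/
def RExp.epsExp {A : Type} (t : RExp A) : RExp A := if t.eps then .one else .zero

/-- The Brzozowski derivative. -/
def RExp.deriv {A : Type} [DecidableEq A] : RExp A → A → RExp A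
  | .zero, _ => .zero
  | .one, _ => .zero
  | .char b, a => if b = a then .one else .zero
  | .add t r, a => .add (t.deriv a) (r.deriv a)
  | .mul t r, a => .add (.mul (t.deriv a) r) (.mul t.epsExp (r.deriv a))
  | .star t, a => .mul (t.deriv a) (.star t)
/-- `U° = {(ε, u) | u ∈ U}`, as a lasso language (subset of Σ* × Σ⁺). -/
def circSet {A : Type} (U : Set (List A)) : Set (List A × List A) :=
  {p | p.1 = [] ∧ p.2 ∈ U ∧ p.2 ≠ []}

/-- `U·K = {(uv, w) | u ∈ U, (v, w) ∈ K}`. -/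
def lprod {A : Type} (U : Set (List A)) (K : Set (List A × List A)) :
    Set (List A × List A) :=
  {p | ∃ u v w, u ∈ U ∧ (v, w) ∈ K ∧ p = (u ++ v, w)}

/-- Rational lasso expressions: `ρ ::= 0 | t·ρ | ρ+ρ | r°`. -/
inductive LExp (A : Type) : Type
  | zero
  | scale (t : RExp A) (ρ : LExp A)
  | add (ρ σ : LExp A)
  | circ (r : RExp A)

/-- The side condition of the grammar: under each `(-)°` the expression
lacks the empty word property. -/
def LExp.WF {A : Type} : LExp A → Prop
  | .zero => True
  | .scale _ ρ => ρ.WF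
  | .add ρ σ => ρ.WF ∧ σ.WF
  | .circ r => [] ∉ r.lang

/-- Lasso-language semantics of rational lasso expressions. -/
def LExp.lsem {A : Type} : LExp A → Set (List A × List A)
  | .zero => ∅
  | .scale t ρ => lprod t.lang ρ.lsem
  | .add ρ σ => ρ.lsem ∪ σ.lsem
  | .circ r => circSet r.lang
/-- The sequential splitting relation `∇`, as a finite list of splits. -/
def nabla {A : Type} : RExp A → List (RExp A × RExp A)
  | .zero => []
  | .one => [(.one, .one)]
  | .char a => [(.one, .char a), (.char a, .one)]
  | .add t r => nabla t ++ nabla r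
  | .mul t r => (nabla t).map (fun p => (p.1, .mul p.2 r)) ++
      (nabla r).map (fun p => (.mul t p.1, p.2))
  | .star t => (nabla t).map (fun p => (.mul (.star t) p.1, .mul p.2 (.star t))) ++
      [(.one, .one), (.mul (.star t) t, .one)]
/-- `l` is a prefix of the infinite word `w`. -/
def IsWordPrefix {A : Type} (l : List A) (w : ℕ → A) : Prop :=
  ∀ i (h : i < l.length), l.get ⟨i, h⟩ = w i

/-- `w` is the infinite concatenation `u · f 0 · f 1 · ⋯`. -/
def OmegaCat {A : Type} (u : List A) (f : ℕ → List A) (w : ℕ → A) : Prop :=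
  ∀ n, IsWordPrefix (u ++ ((List.range n).map f).flatten) w

/-- Prepending a finite word to an infinite word. -/
def catWord {A : Type} (u : List A) (w : ℕ → A) : ℕ → A := fun n =>
  if h : n < u.length then u.get ⟨n, h⟩ else w (n - u.length)

/-- The infinite word `u v^ω` (as a function ℕ → Σ), for `v ≠ []`. -/
def uvOmega {A : Type} [Inhabited A] (u v : List A) : ℕ → A := fun n =>
  if h : n < u.length then u.get ⟨n, h⟩
  else v.getD ((n - u.length) % v.length) default

/-- Rational ω-expressions: `T ::= 0 | T+T | t·T | r^ω`. -/
inductive OExp (A : Type) : Type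
  | zero
  | add (T₁ T₂ : OExp A)
  | scale (t : RExp A) (T : OExp A)
  | omega (r : RExp A)

/-- ω-language semantics of rational ω-expressions (infinite words as
functions ℕ → Σ). -/
def OExp.osem {A : Type} : OExp A → Set (ℕ → A)
  | .zero => ∅
  | .add T₁ T₂ => T₁.osem ∪ T₂.osem
  | .scale t T => {w | ∃ u ∈ t.lang, ∃ w' ∈ T.osem, w = catWord u w'}
  | .omega r => {w | ∃ f : ℕ → List A, (∀ i, f i ∈ r.lang ∧ f i ≠ []) ∧ OmegaCat [] f w}

/-- The grammar side condition: `ε ∉ ⟦r⟧` under each `(-)^ω`. -/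
def OExp.OWF {A : Type} : OExp A → Prop
  | .zero => True
  | .add T₁ T₂ => T₁.OWF ∧ T₂.OWF
  | .scale _ T => T.OWF
  | .omega r => [] ∉ r.lang

/-- Finite sums of rational lasso expressions. -/
def sumL {A : Type} (l : List (LExp A)) : LExp A := l.foldr .add .zero

/-- The map `h` from rational ω-expressions to rational lasso expressions:
`h(t^ω) = ∑_{(t₀,t₁)∈∇_t} (t*·t₀)·(t₁·t*·t₀)°`. -/
def hmap {A : Type} : OExp A → LExp A
  | .zero => .zero
  | .add T₁ T₂ => .add (hmap T₁) (hmap T₂)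
  | .scale t T => .scale t (hmap T)
  | .omega r => sumL ((nabla r).map (fun p =>
      .scale (.mul (.star r) p.1) (.circ (.mul p.2 (.mul (.star r) p.1)))))

inductive GammaStep {A : Type} : (List A × List A) → (List A × List A) → Prop
  | g1 (u v : List A) (a : A) : GammaStep (u ++ [a], v ++ [a]) (u, a :: v)
  | g2 (u v : List A) (k : ℕ) (hk : 1 < k) (hv : v ≠ []) :
      GammaStep (u, (List.replicate k v).flatten) (u, v)


section GammaClosureAux

open Language

private lemma mem_kstar_of_mem' {A : Type} {l : Language A} {x : List A} (hx : x ∈ l) :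
    x ∈ KStar.kstar l := by
  exact Language.mem_kstar.2 ⟨[x], by simp, by simp [hx]⟩

private lemma append_mem_kstar' {A : Type} {l : Language A} {x y : List A}
    (hx : x ∈ KStar.kstar l) (hy : y ∈ KStar.kstar l) : x ++ y ∈ KStar.kstar l := by
  rw [Language.mem_kstar] at hx hy ⊢
  obtain ⟨L, rfl, hL⟩ := hx
  obtain ⟨M, rfl, hM⟩ := hy
  refine ⟨L ++ M, by simp, ?_⟩
  intro z hz
  rcases List.mem_append.1 hz with h | h
  exacts [hL z h, hM z h]

private lemma cons_mem_kstar' {A : Type} {l : Language A} {a : A} {w : List A}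
    (h : a :: w ∈ KStar.kstar l) :
    ∃ b rest, a :: b ∈ l ∧ rest ∈ KStar.kstar l ∧ w = b ++ rest := by
  rw [Language.mem_kstar_iff_exists_nonempty] at h
  obtain ⟨S, hS, hmem⟩ := h
  cases S with
  | nil => simp at hS
  | cons b S' =>
    have hb := hmem b (List.mem_cons_self)
    cases b with
    | nil => exact absurd rfl hb.2
    | cons c b' =>
      rw [List.flatten_cons, List.cons_append] at hS
      injection hS with h1 h2
      subst h1
      exact ⟨b', S'.flatten, hb.1,
        Language.join_mem_kstar (fun y hy => (hmem y (List.mem_cons_of_mem _ hy)).1), h2⟩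

private lemma nabla_sound {A : Type} : ∀ (r t₀ t₁ : RExp A), (t₀, t₁) ∈ nabla r →
    ∀ x y : List A, x ∈ t₀.lang → y ∈ t₁.lang → x ++ y ∈ r.lang := by
  intro r
  induction r with
  | zero => intro t₀ t₁ hp; simp [nabla] at hp
  | one =>
    intro t₀ t₁ hp x y hx hy
    simp only [nabla, List.mem_singleton, Prod.mk.injEq] at hp
    obtain ⟨rfl, rfl⟩ := hp
    simp only [RExp.lang, Language.mem_one] at hx hy
    subst hx; subst hy
    simp [RExp.lang]
  | char a =>
    intro t₀ t₁ hp x y hx hy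
    simp only [nabla, List.mem_cons, List.not_mem_nil, or_false, Prod.mk.injEq] at hp
    rcases hp with ⟨rfl, rfl⟩ | ⟨rfl, rfl⟩
    · simp only [RExp.lang, Language.mem_one] at hx
      simp only [RExp.lang, Set.mem_singleton_iff] at hy
      subst hx; subst hy
      exact rfl
    · simp only [RExp.lang, Set.mem_singleton_iff] at hx
      simp only [RExp.lang, Language.mem_one] at hy
      subst hx; subst hy
      exact rfl
  | add t r iht ihr =>
    intro t₀ t₁ hp x y hx hy
    simp only [nabla, List.mem_append] at hp
    simp only [RExp.lang, Language.mem_add]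
    rcases hp with hp | hp
    · exact Or.inl (iht _ _ hp x y hx hy)
    · exact Or.inr (ihr _ _ hp x y hx hy)
  | mul t r iht ihr =>
    intro t₀ t₁ hp x y hx hy
    simp only [nabla, List.mem_append, List.mem_map] at hp
    simp only [RExp.lang]
    rcases hp with ⟨⟨p₀, p₁⟩, hpm, heq⟩ | ⟨⟨p₀, p₁⟩, hpm, heq⟩ <;> cases heq
    · simp only [RExp.lang] at hy
      rw [Language.mem_mul] at hy
      obtain ⟨m, hm, q, hq, rfl⟩ := hy
      rw [← List.append_assoc]
      exact Language.append_mem_mul (iht _ _ hpm x m hx hm) hq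
    · simp only [RExp.lang] at hx
      rw [Language.mem_mul] at hx
      obtain ⟨c, hc, d, hd, rfl⟩ := hx
      rw [List.append_assoc]
      exact Language.append_mem_mul hc (ihr _ _ hpm d y hd hy)
  | star t iht =>
    intro t₀ t₁ hp x y hx hy
    simp only [nabla, List.mem_append, List.mem_map, List.mem_cons, List.not_mem_nil, or_false,
      Prod.mk.injEq] at hp
    simp only [RExp.lang]
    rcases hp with ⟨⟨p₀, p₁⟩, hpm, heq1, heq2⟩ | ⟨rfl, rfl⟩ | ⟨rfl, rfl⟩
    · subst heq1; subst heq2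
      simp only [RExp.lang] at hx hy
      rw [Language.mem_mul] at hx hy
      obtain ⟨c, hc, d, hd, rfl⟩ := hx
      obtain ⟨e, he, f, hf, rfl⟩ := hy
      have hde : d ++ e ∈ KStar.kstar t.lang := mem_kstar_of_mem' (iht _ _ hpm d e hd he)
      have := append_mem_kstar' (append_mem_kstar' hc hde) hf
      simpa [List.append_assoc] using this
    · simp only [RExp.lang, Language.mem_one] at hx hy
      subst hx; subst hy
      exact Language.nil_mem_kstar _
    · simp only [RExp.lang, Language.mem_one] at hy
      subst hy
      simp only [RExp.lang] at hx
      rw [Language.mem_mul] at hx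
      obtain ⟨c, hc, d, hd, rfl⟩ := hx
      rw [List.append_nil]
      exact append_mem_kstar' hc (mem_kstar_of_mem' hd)

private lemma nabla_complete {A : Type} : ∀ (r : RExp A) (x y : List A), x ++ y ∈ r.lang →
    ∃ t₀ t₁, (t₀, t₁) ∈ nabla r ∧ x ∈ t₀.lang ∧ y ∈ t₁.lang := by
  intro r
  induction r with
  | zero => intro x y h; simp only [RExp.lang] at h; exact absurd h (Language.notMem_zero _)
  | one =>
    intro x y h
    simp only [RExp.lang, Language.mem_one, List.append_eq_nil_iff] at h
    obtain ⟨rfl, rfl⟩ := h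
    exact ⟨.one, .one, by simp [nabla], Language.nil_mem_one, Language.nil_mem_one⟩
  | char a =>
    intro x y h
    simp only [RExp.lang, Set.mem_singleton_iff] at h
    cases x with
    | nil =>
      simp only [List.nil_append] at h
      refine ⟨.one, .char a, by simp [nabla], Language.nil_mem_one, ?_⟩
      rw [h]; exact rfl
    | cons c x' =>
      rw [List.cons_append] at h
      injection h with h1 h2
      subst h1
      obtain ⟨rfl, rfl⟩ := List.append_eq_nil_iff.1 h2
      exact ⟨.char c, .one, by simp [nabla], rfl, Language.nil_mem_one⟩
  | add t r iht ihr =>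
    intro x y h
    simp only [RExp.lang, Language.mem_add] at h
    rcases h with h | h
    · obtain ⟨t₀, t₁, hm, hx, hy⟩ := iht x y h
      exact ⟨t₀, t₁, by simp only [nabla, List.mem_append]; exact Or.inl hm, hx, hy⟩
    · obtain ⟨t₀, t₁, hm, hx, hy⟩ := ihr x y h
      exact ⟨t₀, t₁, by simp only [nabla, List.mem_append]; exact Or.inr hm, hx, hy⟩
  | mul t r iht ihr =>
    intro x y h
    simp only [RExp.lang] at h
    rw [Language.mem_mul] at h
    obtain ⟨p, hp, q, hq, hpq⟩ := h
    rcases List.append_eq_append_iff.1 hpq.symm with ⟨m, hm1, hm2⟩ | ⟨m, hm1, hm2⟩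
    · obtain ⟨q₀, q₁, hqm, hx0, hm0⟩ := iht x m (by rw [← hm1]; exact hp)
      refine ⟨q₀, .mul q₁ r, ?_, hx0, ?_⟩
      · simp only [nabla, List.mem_append, List.mem_map]
        exact Or.inl ⟨(q₀, q₁), hqm, rfl⟩
      · subst hm2
        simp only [RExp.lang]
        exact Language.append_mem_mul hm0 hq
    · obtain ⟨q₀, q₁, hqm, hm0, hy0⟩ := ihr m y (by rw [← hm2]; exact hq)
      refine ⟨.mul t q₀, q₁, ?_, ?_, hy0⟩
      · simp only [nabla, List.mem_append, List.mem_map]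
        exact Or.inr ⟨(q₀, q₁), hqm, rfl⟩
      · subst hm1
        simp only [RExp.lang]
        exact Language.append_mem_mul hp hm0
  | star t iht =>
    intro x y h
    simp only [RExp.lang] at h
    rw [Language.mem_kstar] at h
    obtain ⟨L, hL, hmem⟩ := h
    induction L generalizing x y with
    | nil =>
      simp only [List.flatten_nil] at hL
      obtain ⟨rfl, rfl⟩ := List.append_eq_nil_iff.1 hL
      exact ⟨.one, .one, by simp [nabla], Language.nil_mem_one, Language.nil_mem_one⟩
    | cons b L' ihL =>
      have hb : b ∈ t.lang := hmem b (List.mem_cons_self)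
      have hL'mem : ∀ c ∈ L', c ∈ t.lang := fun c hc => hmem c (List.mem_cons_of_mem _ hc)
      rw [List.flatten_cons] at hL
      rcases List.append_eq_append_iff.1 hL with ⟨m, hm1, hm2⟩ | ⟨m, hm1, hm2⟩
      · obtain ⟨q₀, q₁, hqm, hx0, hm0⟩ := iht x m (by rw [← hm1]; exact hb)
        refine ⟨.mul (.star t) q₀, .mul q₁ (.star t), ?_, ?_, ?_⟩
        · simp only [nabla, List.mem_append, List.mem_map, List.mem_cons]
          exact Or.inl ⟨(q₀, q₁), hqm, rfl⟩
        · simp only [RExp.lang]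
          have := Language.append_mem_mul (Language.nil_mem_kstar t.lang) hx0
          simpa using this
        · subst hm2
          simp only [RExp.lang]
          exact Language.append_mem_mul hm0 (Language.join_mem_kstar hL'mem)
      · obtain ⟨s₀, s₁, hsm, hm0, hy0⟩ := ihL m y hm2.symm hL'mem
        have hsm' := hsm
        simp only [nabla, List.mem_append, List.mem_map, List.mem_cons, List.not_mem_nil,
          or_false, Prod.mk.injEq] at hsm
        rcases hsm with ⟨⟨q₀, q₁⟩, hqm, heq1, heq2⟩ | ⟨h1, h2⟩ | ⟨h1, h2⟩
        · subst heq1; subst heq2; subst hm1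
          refine ⟨_, _, hsm', ?_, hy0⟩
          simp only [RExp.lang] at hm0 ⊢
          rw [Language.mem_mul] at hm0
          obtain ⟨c, hc, d, hd, rfl⟩ := hm0
          rw [← List.append_assoc]
          exact Language.append_mem_mul (append_mem_kstar' (mem_kstar_of_mem' hb) hc) hd
        · subst h1; subst h2; subst hm1
          simp only [RExp.lang, Language.mem_one] at hm0
          subst hm0
          refine ⟨.mul (.star t) t, .one, ?_, ?_, hy0⟩
          · simp [nabla]
          · simp only [RExp.lang]
            have := Language.append_mem_mul (Language.nil_mem_kstar t.lang) hb
            simpa using this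
        · subst h1; subst h2; subst hm1
          refine ⟨.mul (.star t) t, .one, by simp [nabla], ?_, hy0⟩
          simp only [RExp.lang] at hm0 ⊢
          rw [Language.mem_mul] at hm0
          obtain ⟨c, hc, d, hd, rfl⟩ := hm0
          rw [← List.append_assoc]
          exact Language.append_mem_mul (append_mem_kstar' (mem_kstar_of_mem' hb) hc) hd

private lemma nabla_shift {A : Type} : ∀ (r t₀ t₁ : RExp A), (t₀, t₁) ∈ nabla r →
    ∀ (a : A) (w : List A), a :: w ∈ t₁.lang →
    ∃ s₀ s₁, (s₀, s₁) ∈ nabla r ∧ (∀ x ∈ t₀.lang, x ++ [a] ∈ s₀.lang) ∧ w ∈ s₁.lang := by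
  intro r
  induction r with
  | zero => intro t₀ t₁ hp; simp [nabla] at hp
  | one =>
    intro t₀ t₁ hp a w hw
    simp only [nabla, List.mem_singleton, Prod.mk.injEq] at hp
    obtain ⟨rfl, rfl⟩ := hp
    simp [RExp.lang, Language.mem_one] at hw
  | char b =>
    intro t₀ t₁ hp a w hw
    simp only [nabla, List.mem_cons, List.not_mem_nil, or_false, Prod.mk.injEq] at hp
    rcases hp with ⟨rfl, rfl⟩ | ⟨rfl, rfl⟩
    · simp only [RExp.lang, Set.mem_singleton_iff] at hw
      injection hw with h1 h2
      subst h2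
      refine ⟨.char b, .one, by simp [nabla], ?_, Language.nil_mem_one⟩
      intro x hx
      simp only [RExp.lang, Language.mem_one] at hx
      subst hx
      rw [List.nil_append, h1]; exact rfl
    · simp [RExp.lang, Language.mem_one] at hw
  | add t r iht ihr =>
    intro t₀ t₁ hp a w hw
    simp only [nabla, List.mem_append] at hp
    rcases hp with hp | hp
    · obtain ⟨s₀, s₁, hsm, hpush, hw'⟩ := iht _ _ hp a w hw
      exact ⟨s₀, s₁, by simp only [nabla, List.mem_append]; exact Or.inl hsm, hpush, hw'⟩
    · obtain ⟨s₀, s₁, hsm, hpush, hw'⟩ := ihr _ _ hp a w hw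
      exact ⟨s₀, s₁, by simp only [nabla, List.mem_append]; exact Or.inr hsm, hpush, hw'⟩
  | mul t r iht ihr =>
    intro t₀ t₁ hp a w hw
    simp only [nabla, List.mem_append, List.mem_map] at hp
    rcases hp with ⟨⟨p₀, p₁⟩, hpm, heq⟩ | ⟨⟨p₀, p₁⟩, hpm, heq⟩ <;> cases heq
    · simp only [RExp.lang] at hw
      rw [Language.mem_mul] at hw
      obtain ⟨p, hpmem, q, hq, hpq⟩ := hw
      cases p with
      | nil =>
        simp only [List.nil_append] at hpq
        subst hpq
        obtain ⟨s₀, s₁, hsm, ha, hw'⟩ := nabla_complete r [a] w hq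
        refine ⟨.mul t s₀, s₁, ?_, ?_, hw'⟩
        · simp only [nabla, List.mem_append, List.mem_map]
          exact Or.inr ⟨(s₀, s₁), hsm, rfl⟩
        · intro x hx
          have hxt : x ∈ t.lang := by
            have := nabla_sound t p₀ p₁ hpm x [] hx hpmem
            simpa using this
          simp only [RExp.lang]
          exact Language.append_mem_mul hxt ha
      | cons c p' =>
        rw [List.cons_append] at hpq
        injection hpq with h1 h2
        subst h1
        obtain ⟨q₀, q₁, hqm, hpush, hp'⟩ := iht p₀ p₁ hpm c p' hpmem
        refine ⟨q₀, .mul q₁ r, ?_, hpush, ?_⟩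
        · simp only [nabla, List.mem_append, List.mem_map]
          exact Or.inl ⟨(q₀, q₁), hqm, rfl⟩
        · subst h2
          simp only [RExp.lang]
          exact Language.append_mem_mul hp' hq
    · obtain ⟨q₀, q₁, hqm, hpush, hw'⟩ := ihr p₀ p₁ hpm a w hw
      refine ⟨.mul t q₀, q₁, ?_, ?_, hw'⟩
      · simp only [nabla, List.mem_append, List.mem_map]
        exact Or.inr ⟨(q₀, q₁), hqm, rfl⟩
      · intro x hx
        simp only [RExp.lang] at hx ⊢
        rw [Language.mem_mul] at hx
        obtain ⟨c, hc, d, hd, rfl⟩ := hx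
        rw [List.append_assoc]
        exact Language.append_mem_mul hc (hpush d hd)
  | star t iht =>
    intro t₀ t₁ hp a w hw
    simp only [nabla, List.mem_append, List.mem_map, List.mem_cons, List.not_mem_nil, or_false,
      Prod.mk.injEq] at hp
    rcases hp with ⟨⟨p₀, p₁⟩, hpm, heq1, heq2⟩ | ⟨rfl, rfl⟩ | ⟨rfl, rfl⟩
    · subst heq1; subst heq2
      simp only [RExp.lang] at hw
      rw [Language.mem_mul] at hw
      obtain ⟨y, hy, z, hz, hyz⟩ := hw
      cases y with
      | nil =>
        simp only [List.nil_append] at hyz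
        subst hyz
        obtain ⟨b, rest, hab, hrest, rfl⟩ := cons_mem_kstar' hz
        obtain ⟨q₀, q₁, hqm, ha, hb⟩ := nabla_complete t [a] b hab
        refine ⟨.mul (.star t) q₀, .mul q₁ (.star t), ?_, ?_, ?_⟩
        · simp only [nabla, List.mem_append, List.mem_map, List.mem_cons]
          exact Or.inl ⟨(q₀, q₁), hqm, rfl⟩
        · intro x hx
          simp only [RExp.lang] at hx ⊢
          rw [Language.mem_mul] at hx
          obtain ⟨c, hc, d, hd, rfl⟩ := hx
          have hdt : d ∈ t.lang := by
            have := nabla_sound t p₀ p₁ hpm d [] hd hy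
            simpa using this
          have hx' : c ++ d ∈ KStar.kstar t.lang := append_mem_kstar' hc (mem_kstar_of_mem' hdt)
          exact Language.append_mem_mul hx' ha
        · simp only [RExp.lang]
          exact Language.append_mem_mul hb hrest
      | cons c y' =>
        rw [List.cons_append] at hyz
        injection hyz with h1 h2
        subst h1
        obtain ⟨q₀, q₁, hqm, hpush, hy''⟩ := iht p₀ p₁ hpm c y' hy
        refine ⟨.mul (.star t) q₀, .mul q₁ (.star t), ?_, ?_, ?_⟩
        · simp only [nabla, List.mem_append, List.mem_map, List.mem_cons]
          exact Or.inl ⟨(q₀, q₁), hqm, rfl⟩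
        · intro x hx
          simp only [RExp.lang] at hx ⊢
          rw [Language.mem_mul] at hx
          obtain ⟨cc, hcc, d, hd, rfl⟩ := hx
          rw [List.append_assoc]
          exact Language.append_mem_mul hcc (hpush d hd)
        · subst h2
          simp only [RExp.lang]
          exact Language.append_mem_mul hy'' hz
    · simp [RExp.lang, Language.mem_one] at hw
    · simp [RExp.lang, Language.mem_one] at hw

private lemma mem_sumL {A : Type} (l : List (LExp A)) (x : List A × List A) :
    x ∈ (sumL l).lsem ↔ ∃ ρ ∈ l, x ∈ ρ.lsem := by
  induction l with
  | nil => simp [sumL, LExp.lsem]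
  | cons ρ l ih =>
    constructor
    · intro h
      rcases (Set.mem_union _ _ _).1 h with h | h
      · exact ⟨ρ, List.mem_cons_self, h⟩
      · obtain ⟨σ, hσ, hx⟩ := ih.1 h
        exact ⟨σ, List.mem_cons_of_mem _ hσ, hx⟩
    · rintro ⟨σ, hσ, hx⟩
      rcases List.mem_cons.1 hσ with rfl | hσ
      · exact (Set.mem_union _ _ _).2 (Or.inl hx)
      · exact (Set.mem_union _ _ _).2 (Or.inr (ih.2 ⟨σ, hσ, hx⟩))

private lemma mem_scale_circ {A : Type} (s e : RExp A) (u v : List A) :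
    (u, v) ∈ (LExp.scale s (LExp.circ e)).lsem ↔ u ∈ s.lang ∧ v ∈ e.lang ∧ v ≠ [] := by
  constructor
  · rintro ⟨u', v', w', hu', ⟨hv', hw', hne⟩, heq⟩
    simp only at hv'
    subst hv'
    rw [List.append_nil] at heq
    injection heq with h1 h2
    subst h1; subst h2
    exact ⟨hu', hw', hne⟩
  · rintro ⟨hu, hv, hne⟩
    exact ⟨u, [], v, hu, ⟨rfl, hv, hne⟩, by simp⟩

private lemma mem_hmap_omega {A : Type} (r : RExp A) (u v : List A) :
    (u, v) ∈ (hmap (OExp.omega r)).lsem ↔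
      ∃ t₀ t₁, (t₀, t₁) ∈ nabla r ∧ u ∈ (RExp.mul (.star r) t₀).lang ∧
        v ∈ (RExp.mul t₁ (.mul (.star r) t₀)).lang ∧ v ≠ [] := by
  simp only [hmap]
  rw [mem_sumL]
  constructor
  · rintro ⟨ρ, hρ, hx⟩
    obtain ⟨⟨t₀, t₁⟩, hmem, rfl⟩ := List.mem_map.1 hρ
    rw [mem_scale_circ] at hx
    exact ⟨t₀, t₁, hmem, hx.1, hx.2.1, hx.2.2⟩
  · rintro ⟨t₀, t₁, hmem, hu, hv, hne⟩
    refine ⟨_, List.mem_map_of_mem hmem, ?_⟩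
    rw [mem_scale_circ]
    exact ⟨hu, hv, hne⟩

private lemma S_append {A : Type} {r t₀ t₁ : RExp A} (hp : (t₀, t₁) ∈ nabla r) {v w : List A}
    (hv : v ∈ (RExp.mul t₁ (RExp.mul (.star r) t₀)).lang)
    (hw : w ∈ (RExp.mul t₁ (RExp.mul (.star r) t₀)).lang) :
    v ++ w ∈ (RExp.mul t₁ (RExp.mul (.star r) t₀)).lang := by
  simp only [RExp.lang] at hv hw ⊢
  rw [Language.mem_mul] at hv hw ⊢
  obtain ⟨y, hy, m, hm, rfl⟩ := hv
  rw [Language.mem_mul] at hm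
  obtain ⟨z, hz, x, hx, rfl⟩ := hm
  obtain ⟨y', hy', m', hm', rfl⟩ := hw
  rw [Language.mem_mul] at hm'
  obtain ⟨z', hz', x', hx', rfl⟩ := hm'
  have hxy' : x ++ y' ∈ r.lang := nabla_sound r t₀ t₁ hp x y' hx hy'
  have hmid : (z ++ (x ++ y')) ++ z' ∈ KStar.kstar r.lang :=
    append_mem_kstar' (append_mem_kstar' hz (mem_kstar_of_mem' hxy')) hz'
  refine ⟨y, hy, _, Language.append_mem_mul hmid hx', ?_⟩
  simp [List.append_assoc]

private lemma rep_mem {A : Type} {r t₀ t₁ : RExp A} (hp : (t₀, t₁) ∈ nabla r) {v : List A}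
    (hv : v ∈ (RExp.mul t₁ (RExp.mul (.star r) t₀)).lang) :
    ∀ k, 0 < k → (List.replicate k v).flatten ∈ (RExp.mul t₁ (RExp.mul (.star r) t₀)).lang := by
  intro k
  induction k with
  | zero => intro h; exact absurd h (lt_irrefl 0)
  | succ k ih =>
    intro _
    rcases Nat.eq_zero_or_pos k with rfl | hk
    · simpa using hv
    · rw [List.replicate_succ, List.flatten_cons]
      exact S_append hp hv (ih hk)

private lemma hmap_step_closed {A : Type} : ∀ (T : OExp A) (p q : List A × List A),
    GammaStep p q → q ∈ (hmap T).lsem → p ∈ (hmap T).lsem := by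
  intro T
  induction T with
  | zero =>
    intro p q _ hq
    simp [hmap, LExp.lsem] at hq
  | add T₁ T₂ ih₁ ih₂ =>
    intro p q hstep hq
    simp only [hmap, LExp.lsem] at hq ⊢
    rcases (Set.mem_union _ _ _).1 hq with h | h
    · exact (Set.mem_union _ _ _).2 (Or.inl (ih₁ p q hstep h))
    · exact (Set.mem_union _ _ _).2 (Or.inr (ih₂ p q hstep h))
  | scale t T ih =>
    intro p q hstep hq
    simp only [hmap, LExp.lsem] at hq ⊢
    obtain ⟨u₀, v₀, w₀, hu₀, hK, heq⟩ := hq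
    cases hstep with
    | g1 u v a =>
      injection heq with h1 h2
      subst h1; subst h2
      have hK' := ih (v₀ ++ [a], v ++ [a]) (v₀, a :: v) (GammaStep.g1 v₀ v a) hK
      exact ⟨u₀, v₀ ++ [a], v ++ [a], hu₀, hK', by rw [List.append_assoc]⟩
    | g2 u v k hk hv =>
      injection heq with h1 h2
      subst h1; subst h2
      have hK' := ih (v₀, (List.replicate k v).flatten) (v₀, v) (GammaStep.g2 v₀ v k hk hv) hK
      exact ⟨u₀, v₀, _, hu₀, hK', rfl⟩
  | omega r =>
    intro p q hstep hq
    cases hstep with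
    | g1 u v a =>
      rw [mem_hmap_omega] at hq ⊢
      obtain ⟨t₀, t₁, hmem, hu, hv, hne⟩ := hq
      simp only [RExp.lang] at hu hv
      rw [Language.mem_mul] at hu hv
      obtain ⟨c, hc, d, hd, hcd⟩ := hu
      obtain ⟨y, hy, m, hm, hym⟩ := hv
      rw [Language.mem_mul] at hm
      obtain ⟨z, hz, x, hx, hzx⟩ := hm
      cases y with
      | nil =>
        simp only [List.nil_append] at hym
        have hdr : d ∈ r.lang := by
          have := nabla_sound r t₀ t₁ hmem d [] hd hy
          simpa using this
        have hu' : u ∈ KStar.kstar r.lang := by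
          have h := append_mem_kstar' hc (mem_kstar_of_mem' hdr)
          rwa [hcd] at h
        have hxr : x ∈ r.lang := by
          have := nabla_sound r t₀ t₁ hmem x [] hx hy
          simpa using this
        have hav : a :: v ∈ KStar.kstar r.lang := by
          have h := append_mem_kstar' hz (mem_kstar_of_mem' hxr)
          rwa [hzx, hym] at h
        obtain ⟨b, rest, hab, hrest, rfl⟩ := cons_mem_kstar' hav
        obtain ⟨s₀, s₁, hsm, ha, hb⟩ := nabla_complete r [a] b hab
        refine ⟨s₀, s₁, hsm, ?_, ?_, by simp⟩
        · simp only [RExp.lang]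
          exact Language.append_mem_mul hu' ha
        · simp only [RExp.lang]
          have hrr : rest ++ [a] ∈ KStar.kstar r.lang * s₀.lang :=
            Language.append_mem_mul hrest ha
          have h2 := Language.append_mem_mul hb hrr
          simpa [List.append_assoc] using h2
      | cons cc y' =>
        rw [List.cons_append] at hym
        injection hym with h1 h2
        subst h1
        obtain ⟨s₀, s₁, hsm, hpush, hy'⟩ := nabla_shift r t₀ t₁ hmem cc y' hy
        refine ⟨s₀, s₁, hsm, ?_, ?_, by simp⟩
        · simp only [RExp.lang]
          rw [← hcd, List.append_assoc]
          exact Language.append_mem_mul hc (hpush d hd)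
        · simp only [RExp.lang]
          have hxa : x ++ [cc] ∈ s₀.lang := hpush x hx
          have hmid : z ++ (x ++ [cc]) ∈ KStar.kstar r.lang * s₀.lang :=
            Language.append_mem_mul hz hxa
          have hfin := Language.append_mem_mul hy' hmid
          rw [← h2, ← hzx]
          simpa [List.append_assoc] using hfin
    | g2 u v k hk hv =>
      rw [mem_hmap_omega] at hq ⊢
      obtain ⟨t₀, t₁, hmem, hu, hvS, hne⟩ := hq
      refine ⟨t₀, t₁, hmem, hu, rep_mem hmem hvS k (by omega), ?_⟩
      cases k with
      | zero => omega
      | succ k' =>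
        rw [List.replicate_succ, List.flatten_cons]
        intro h
        exact hne (List.append_eq_nil_iff.1 h).1

end GammaClosureAux

/-- `⟦h(T)⟧∘` is closed under γ-expansion. -/
theorem hmap_closed_under_expansion (A : Type) [Fintype A]
    (T : OExp A) (hT : T.OWF) (p q : List A × List A)
    (hstep : GammaStep p q) (hq : q ∈ (hmap T).lsem) :
    p ∈ (hmap T).lsem :=
  hmap_step_closed T p q hstep hq
end

section
/- Let τ be a rational lasso expression in disjunctive form. If ⟦τ⟧_∘ is closed under γ-expansion, then ⟦Γ(τ)⟧_∘ is ∼_γ-saturated, where Γ(∑ᵢ tᵢ·rᵢ°) = ∑ᵢ ∑_{(t₀,t₁)∈∇_{tᵢ}, (s₀,s₁)∈∇_{rᵢ}} t₀·(√((t₁ ∩ s₁)·s₀))°. Moreover (u,v) ∈ ⟦Γ(τ)⟧_∘ iff there exist k₁,k₂ ≥ 0 and v₁,v₂ with v = v₁v₂ and (u v^{k₁} v₁, v₂ v^{k₂+k₁} v₁) ∈ ⟦τ⟧_∘. -/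
/-- The root operation: `√U = {u ∈ Σ⁺ | ∃ k ≥ 1, u^k ∈ U}`. -/
def rootLang {A : Type} (U : Set (List A)) : Set (List A) :=
  {u | u ≠ [] ∧ ∃ k ≥ 1, (List.replicate k u).flatten ∈ U}

namespace GammaAux
variable {A : Type}

/-- `rep e v = v^e`. -/
abbrev rep (e : ℕ) (v : List A) : List A := (List.replicate e v).flatten

lemma rep_zero (v : List A) : rep 0 v = [] := rfl
lemma rep_succ (e : ℕ) (v : List A) : rep (e+1) v = v ++ rep e v := by
  simp [rep, List.replicate_succ]
lemma rep_one (v : List A) : rep 1 v = v := by simp [rep]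

lemma rep_add (a b : ℕ) (v : List A) : rep (a+b) v = rep a v ++ rep b v := by
  induction a with
  | zero => simp [rep]
  | succ a ih => rw [Nat.succ_add, rep_succ, rep_succ, ih, List.append_assoc]

lemma rep_conj (e : ℕ) (v₁ v₂ : List A) :
    rep e (v₁ ++ v₂) ++ v₁ = v₁ ++ rep e (v₂ ++ v₁) := by
  induction e with
  | zero => simp [rep]
  | succ e ih => rw [rep_succ, rep_succ]; simp only [List.append_assoc, ih]

lemma rep_wrap (m : ℕ) (v₁ v₂ : List A) :
    v₂ ++ (rep m (v₁ ++ v₂) ++ v₁) = rep (m+1) (v₂ ++ v₁) := by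
  rw [rep_conj, rep_succ, List.append_assoc]

lemma rep_rep (a b : ℕ) (v : List A) : rep a (rep b v) = rep (a*b) v := by
  induction a with
  | zero => simp [rep]
  | succ a ih => rw [rep_succ, ih, Nat.succ_mul, Nat.add_comm, rep_add]

lemma rep_ne_nil {v : List A} (hv : v ≠ []) {e : ℕ} (he : 1 ≤ e) : rep e v ≠ [] := by
  obtain ⟨e, rfl⟩ := Nat.exists_eq_add_of_le he
  rw [Nat.add_comm, rep_succ]
  simp [hv]

lemma prefix_split {v : List A} (hv : v ≠ []) {x y : List A} {k : ℕ}
    (h : x ++ y = rep k v) (hy : y ≠ []) :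
    ∃ q m v₁ v₂, v = v₁ ++ v₂ ∧ k = q + m + 1 ∧ x = rep q v ++ v₁ ∧ y = v₂ ++ rep m v := by
  induction k generalizing x with
  | zero => exact absurd (List.append_eq_nil_iff.mp h).2 hy
  | succ k ih =>
    rw [rep_succ] at h
    by_cases hx : x.length ≤ v.length
    · have hpre : x <+: v := by
        refine List.prefix_of_prefix_length_le ⟨y, h⟩ ⟨rep k v, rfl⟩ hx
      obtain ⟨v₂, rfl⟩ := hpre
      refine ⟨0, k, x, v₂, rfl, by omega, by simp, ?_⟩
      have := h
      rw [List.append_assoc] at this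
      exact (List.append_cancel_left this)
    · have hpre : v <+: x := by
        refine List.prefix_of_prefix_length_le ⟨rep k v, rfl⟩ ⟨y, h⟩ (by omega)
      obtain ⟨x', rfl⟩ := hpre
      rw [List.append_assoc] at h
      have h' := List.append_cancel_left h
      obtain ⟨q, m, v₁, v₂, hsplit, hk, hx', hy'⟩ := ih h'
      refine ⟨q+1, m, v₁, v₂, hsplit, by omega, ?_, hy'⟩
      rw [rep_succ, hx', List.append_assoc]

end GammaAux

namespace GammaAux
open Computability
variable {A : Type}

lemma cons_mem_kstar {T : Language A} {w d : List A} (hw : w ∈ T) (hd : d ∈ T∗) :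
    w ++ d ∈ T∗ := by
  rw [Language.mem_kstar] at hd ⊢
  obtain ⟨L, rfl, hL⟩ := hd
  refine ⟨w :: L, by simp, ?_⟩
  intro y hy
  rcases List.mem_cons.mp hy with rfl | hy
  · exact hw
  · exact hL y hy

lemma kstar_append {T : Language A} {c d : List A} (hc : c ∈ T∗) (hd : d ∈ T∗) :
    c ++ d ∈ T∗ := by
  rw [Language.mem_kstar] at hc hd ⊢
  obtain ⟨L, rfl, hL⟩ := hc
  obtain ⟨M, rfl, hM⟩ := hd
  refine ⟨L ++ M, by simp, ?_⟩
  intro y hy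
  rcases List.mem_append.mp hy with h | h
  · exact hL y h
  · exact hM y h

lemma kstar_head {T : Language A} {x : List A} (h : x ∈ T∗) (hx : x ≠ []) :
    ∃ w d, x = w ++ d ∧ w ∈ T ∧ w ≠ [] ∧ d ∈ T∗ := by
  rw [Language.mem_kstar_iff_exists_nonempty] at h
  obtain ⟨S, rfl, hS⟩ := h
  cases S with
  | nil => simp at hx
  | cons w S =>
    refine ⟨w, S.flatten, by simp, (hS w (by simp)).1, (hS w (by simp)).2, ?_⟩
    exact Language.join_mem_kstar (fun y hy => (hS y (by simp [hy])).1)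

lemma kstar_last {T : Language A} {x : List A} (h : x ∈ T∗) (hx : x ≠ []) :
    ∃ c w, x = c ++ w ∧ c ∈ T∗ ∧ w ∈ T := by
  rw [Language.mem_kstar_iff_exists_nonempty] at h
  obtain ⟨S, rfl, hS⟩ := h
  rcases S.eq_nil_or_concat with rfl | ⟨S', w, rfl⟩
  · simp at hx
  · refine ⟨S'.flatten, w, by simp, ?_, (hS w (by simp)).1⟩
    exact Language.join_mem_kstar (fun y hy => (hS y (by simp [hy])).1)

lemma kstar_split_aux {T : Language A} :
    ∀ (L : List (List A)) (u x : List A), u ++ x = L.flatten → (∀ y ∈ L, y ∈ T) →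
    (u ∈ T∗ ∧ x ∈ T∗) ∨
    ∃ c w₀ w₁ d, u = c ++ w₀ ∧ x = w₁ ++ d ∧ c ∈ T∗ ∧ w₀ ++ w₁ ∈ T ∧ d ∈ T∗ ∧
      w₀ ≠ [] ∧ w₁ ≠ [] := by
  intro L
  induction L with
  | nil =>
    intro u x hL _
    obtain ⟨rfl, rfl⟩ := List.append_eq_nil_iff.mp (by simpa using hL)
    exact Or.inl ⟨Language.nil_mem_kstar T, Language.nil_mem_kstar T⟩
  | cons w L ih =>
    intro u x hL hmem
    rw [List.flatten_cons] at hL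
    have hLmem : ∀ y ∈ L, y ∈ T := fun y hy => hmem y (by simp [hy])
    have hw : w ∈ T := hmem w (by simp)
    have hLk : L.flatten ∈ T∗ := Language.join_mem_kstar hLmem
    by_cases hu : u.length ≤ w.length
    · have hpre : u <+: w :=
        List.prefix_of_prefix_length_le ⟨x, hL⟩ ⟨L.flatten, rfl⟩ hu
      obtain ⟨w₁, rfl⟩ := hpre
      rw [List.append_assoc] at hL
      have hx : x = w₁ ++ L.flatten := List.append_cancel_left hL
      rcases u with _ | ⟨a, u'⟩
      · refine Or.inl ⟨Language.nil_mem_kstar T, ?_⟩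
        rw [hx]
        exact cons_mem_kstar (by simpa using hw) hLk
      · rcases w₁ with _ | ⟨b, w₁'⟩
        · refine Or.inl ⟨?_, by rw [hx]; simpa using hLk⟩
          rw [List.append_nil] at hw
          simpa using cons_mem_kstar hw (Language.nil_mem_kstar T)
        · exact Or.inr ⟨[], _, _, L.flatten, rfl, hx, Language.nil_mem_kstar T, hw,
            hLk, by simp, by simp⟩
    · have hpre : w <+: u :=
        List.prefix_of_prefix_length_le ⟨L.flatten, hL.symm⟩ ⟨x, rfl⟩ (by omega)
      obtain ⟨u', rfl⟩ := hpre
      rw [List.append_assoc] at hL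
      have h' : u' ++ x = L.flatten := List.append_cancel_left hL
      rcases ih u' x h' hLmem with ⟨h1, h2⟩ | ⟨c, w₀, w₁, d, rfl, hx, hc, hmid, hd, hw₀, hw₁⟩
      · exact Or.inl ⟨cons_mem_kstar hw h1, h2⟩
      · exact Or.inr ⟨w ++ c, w₀, w₁, d, by rw [List.append_assoc], hx,
          cons_mem_kstar hw hc, hmid, hd, hw₀, hw₁⟩

lemma kstar_split {T : Language A} {u x : List A} (h : u ++ x ∈ T∗) :
    (u ∈ T∗ ∧ x ∈ T∗) ∨
    ∃ c w₀ w₁ d, u = c ++ w₀ ∧ x = w₁ ++ d ∧ c ∈ T∗ ∧ w₀ ++ w₁ ∈ T ∧ d ∈ T∗ ∧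
      w₀ ≠ [] ∧ w₁ ≠ [] := by
  rw [Language.mem_kstar] at h
  obtain ⟨L, hL, hmem⟩ := h
  exact kstar_split_aux L u x hL hmem

lemma nabla_sound (t : RExp A) :
    ∀ p ∈ nabla t, ∀ u x, u ∈ p.1.lang → x ∈ p.2.lang → u ++ x ∈ t.lang := by
  induction t with
  | zero => intro p hp; simp [nabla] at hp
  | one =>
    intro p hp u x hu hx
    simp only [nabla, List.mem_singleton] at hp
    subst hp
    simp only [RExp.lang, Language.mem_one] at hu hx ⊢
    simp [hu, hx]
  | char a =>
    intro p hp u x hu hx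
    simp only [nabla, List.mem_cons, List.mem_singleton] at hp
    rcases hp with rfl | rfl | h
    · simp only [RExp.lang, Language.mem_one] at hu
      subst hu; simpa using hx
    · simp only [RExp.lang, Language.mem_one] at hx
      subst hx; simpa using hu
    · simp at h
  | add t r iht ihr =>
    intro p hp u x hu hx
    simp only [nabla, List.mem_append] at hp
    rcases hp with h | h
    · exact Or.inl (iht p h u x hu hx)
    · exact Or.inr (ihr p h u x hu hx)
  | mul t r iht ihr =>
    intro p hp u x hu hx
    simp only [nabla, List.mem_append, List.mem_map] at hp
    rcases hp with ⟨q, hq, rfl⟩ | ⟨q, hq, rfl⟩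
    · simp only [RExp.lang, Language.mem_mul] at hx ⊢
      obtain ⟨b, hb, c, hc, rfl⟩ := hx
      exact ⟨u ++ b, iht q hq u b hu hb, c, hc, by simp⟩
    · simp only [RExp.lang, Language.mem_mul] at hu ⊢
      obtain ⟨b, hb, c, hc, rfl⟩ := hu
      exact ⟨b, hb, c ++ x, ihr q hq c x hc hx, by simp⟩
  | star t iht =>
    intro p hp u x hu hx
    simp only [nabla, List.mem_append, List.mem_map, List.mem_cons, List.mem_singleton] at hp
    rcases hp with ⟨q, hq, rfl⟩ | rfl | rfl | h
    · simp only [RExp.lang, Language.mem_mul] at hu hx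
      obtain ⟨c, hc, w₀, hw₀, rfl⟩ := hu
      obtain ⟨w₁, hw₁, d, hd, rfl⟩ := hx
      have hmid : w₀ ++ w₁ ∈ t.lang := iht q hq w₀ w₁ hw₀ hw₁
      show (c ++ w₀) ++ (w₁ ++ d) ∈ t.lang∗
      have heq : (c ++ w₀) ++ (w₁ ++ d) = c ++ ((w₀ ++ w₁) ++ d) := by simp
      rw [heq]
      exact kstar_append hc (cons_mem_kstar hmid hd)
    · simp only [RExp.lang, Language.mem_one] at hu hx
      subst hu; subst hx
      exact Language.nil_mem_kstar _
    · simp only [RExp.lang, Language.mem_mul, Language.mem_one] at hu hx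
      subst hx
      obtain ⟨c, hc, w, hw, rfl⟩ := hu
      show (c ++ w) ++ [] ∈ t.lang∗
      simpa using kstar_append hc (cons_mem_kstar hw (Language.nil_mem_kstar _))
    · simp at h

lemma nabla_complete (t : RExp A) :
    ∀ u x, u ++ x ∈ t.lang → ∃ p ∈ nabla t, u ∈ p.1.lang ∧ x ∈ p.2.lang := by
  induction t with
  | zero => intro u x h; simp [RExp.lang] at h
  | one =>
    intro u x h
    simp only [RExp.lang, Language.mem_one, List.append_eq_nil_iff] at h
    exact ⟨(.one, .one), by simp [nabla], by simp [RExp.lang, h.1], by simp [RExp.lang, h.2]⟩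
  | char a =>
    intro u x h
    simp only [RExp.lang] at h
    rcases u with _ | ⟨b, u'⟩
    · exact ⟨(.one, .char a), by simp [nabla], by simp [RExp.lang],
        by simpa [RExp.lang] using h⟩
    · simp only [Set.mem_singleton_iff, List.cons_append] at h
      have hb : b = a := by injection h
      have hnil : u' ++ x = [] := by injection h
      obtain ⟨rfl, rfl⟩ := List.append_eq_nil_iff.mp hnil
      subst hb
      exact ⟨(.char b, .one), by simp [nabla], by exact rfl, by simp [RExp.lang]⟩
  | add t r iht ihr =>
    intro u x h
    rcases h with h | h
    · obtain ⟨p, hp, h1, h2⟩ := iht u x h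
      exact ⟨p, by simp [nabla, hp], h1, h2⟩
    · obtain ⟨p, hp, h1, h2⟩ := ihr u x h
      exact ⟨p, by simp [nabla, hp], h1, h2⟩
  | mul t r iht ihr =>
    intro u x h
    simp only [RExp.lang, Language.mem_mul] at h
    obtain ⟨a, ha, b, hb, hab⟩ := h
    by_cases hlen : u.length ≤ a.length
    · have hpre : u <+: a :=
        List.prefix_of_prefix_length_le ⟨x, hab.symm⟩ ⟨b, rfl⟩ hlen
      obtain ⟨m, rfl⟩ := hpre
      rw [List.append_assoc] at hab
      have hx : x = m ++ b := (List.append_cancel_left hab.symm)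
      obtain ⟨p, hp, h1, h2⟩ := iht u m ha
      refine ⟨(p.1, .mul p.2 r), List.mem_append_left _ (List.mem_map_of_mem hp), h1, ?_⟩
      show x ∈ p.2.lang * r.lang
      rw [hx]
      exact Language.append_mem_mul h2 hb
    · have hpre : a <+: u :=
        List.prefix_of_prefix_length_le ⟨b, rfl⟩ ⟨x, hab.symm⟩ (by omega)
      obtain ⟨m, rfl⟩ := hpre
      rw [List.append_assoc] at hab
      have hb' : b = m ++ x := List.append_cancel_left hab
      obtain ⟨p, hp, h1, h2⟩ := ihr m x (by rw [← hb']; exact hb)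
      refine ⟨(.mul t p.1, p.2), List.mem_append_right _ (List.mem_map_of_mem hp), ?_, h2⟩
      exact Language.append_mem_mul ha h1
  | star t iht =>
    intro u x h
    rcases kstar_split (show u ++ x ∈ t.lang∗ from h) with
      ⟨hu, hx⟩ | ⟨c, w₀, w₁, d, rfl, rfl, hc, hmid, hd, hw₀, hw₁⟩
    · rcases x with _ | ⟨b, x'⟩
      · rcases u with _ | ⟨a, u'⟩
        · exact ⟨(.one, .one), by simp [nabla], by simp [RExp.lang], by simp [RExp.lang]⟩
        · obtain ⟨c, w, huw, hc, hw⟩ := kstar_last hu (by simp)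
          refine ⟨(.mul (.star t) t, .one), by simp [nabla], ?_, by simp [RExp.lang]⟩
          show (a :: u') ∈ (RExp.star t).lang * t.lang
          rw [huw]
          exact Language.append_mem_mul hc hw
      · obtain ⟨w, d, hwd, hw, hwne, hd⟩ := kstar_head hx (by simp)
        obtain ⟨p, hp, h1, h2⟩ := iht [] w hw
        refine ⟨(.mul (.star t) p.1, .mul p.2 (.star t)),
          List.mem_append_left _ (List.mem_map_of_mem hp), ?_, ?_⟩
        · show u ∈ (RExp.star t).lang * p.1.lang
          simpa [RExp.lang] using Language.append_mem_mul (a := u) hu h1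
        · show (b :: x') ∈ p.2.lang * (RExp.star t).lang
          rw [hwd]
          exact Language.append_mem_mul h2 hd
    · obtain ⟨p, hp, h1, h2⟩ := iht w₀ w₁ hmid
      refine ⟨(.mul (.star t) p.1, .mul p.2 (.star t)),
        List.mem_append_left _ (List.mem_map_of_mem hp), ?_, ?_⟩
      · exact Language.append_mem_mul hc h1
      · exact Language.append_mem_mul h2 hd

end GammaAux

namespace GammaAux
open Computability
variable {A : Type}

lemma seq_eq (v₁ v₂ : List A) (q e : ℕ) :
    rep q (v₁ ++ v₂) ++ v₁ ++ rep e (v₂ ++ v₁) = v₁ ++ rep (q + e) (v₂ ++ v₁) := by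
  rw [rep_conj, List.append_assoc, ← rep_add]

lemma seq_eq' (v₁ v₂ : List A) (q e : ℕ) :
    rep q (v₁ ++ v₂) ++ (v₁ ++ rep e (v₂ ++ v₁)) = v₁ ++ rep (q + e) (v₂ ++ v₁) := by
  rw [← List.append_assoc, seq_eq]

lemma zeq (v₁ v₂ : List A) (m q : ℕ) :
    (v₂ ++ rep m (v₁ ++ v₂)) ++ (rep q (v₁ ++ v₂) ++ v₁) = rep (m + q + 1) (v₂ ++ v₁) := by
  rw [← rep_wrap, rep_add]
  simp [List.append_assoc]

lemma veq (v₁ v₂ : List A) (q m : ℕ) :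
    rep (q + m + 1) (v₁ ++ v₂) = rep q (v₁ ++ v₂) ++ v₁ ++ (v₂ ++ rep m (v₁ ++ v₂)) := by
  have h : q + m + 1 = q + (1 + m) := by omega
  rw [h, rep_add, rep_add, rep_one]
  simp [List.append_assoc]

/-- The canonical-form predicate. -/
def QL (Lτ : Set (List A × List A)) (u v : List A) : Prop :=
  ∃ v₁ v₂ e₁ e₂, v = v₁ ++ v₂ ∧ e₁ < e₂ ∧
    (u ++ v₁ ++ rep e₁ (v₂ ++ v₁), rep e₂ (v₂ ++ v₁)) ∈ Lτ

section Main
variable {Lτ : Set (List A × List A)}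
  (hclose : ∀ x y, GammaStep x y → y ∈ Lτ → x ∈ Lτ)

include hclose

lemma boost {s c : List A} (h : (s, c) ∈ Lτ) (hc : c ≠ []) {m : ℕ} (hm : 2 ≤ m) :
    (s, rep m c) ∈ Lτ :=
  hclose _ _ (GammaStep.g2 s c m (by omega) hc) h

lemma rot {s c : List A} {a : A} (h : (s, a :: c) ∈ Lτ) :
    (s ++ [a], c ++ [a]) ∈ Lτ :=
  hclose _ _ (GammaStep.g1 s c a) h

lemma Q_g2 (u v : List A) (hv : v ≠ []) (k : ℕ) (hk : 1 < k) :
    QL Lτ u (rep k v) ↔ QL Lτ u v := by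
  constructor
  · rintro ⟨V₁, V₂, E₁, E₂, hsplit, hE, hM⟩
    by_cases hV2 : V₂ = []
    · -- V₂ = [], V₁ = rep k v
      subst hV2
      rw [List.append_nil] at hsplit
      subst hsplit
      simp only [List.nil_append] at hM
      have hZ : rep k v ≠ [] := rep_ne_nil hv (by omega)
      have hM2 := boost hclose hM (rep_ne_nil hZ (by omega)) (le_refl 2)
      rw [rep_rep, rep_rep, rep_rep] at hM2
      refine ⟨[], v, k + E₁ * k, 2 * E₂ * k, by simp, ?_, ?_⟩
      · have h1 : (E₁ + 1) * k ≤ E₂ * k := Nat.mul_le_mul_right k hE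
        have h3 : k ≤ E₂ * k := Nat.le_mul_of_pos_left k (by omega)
        rw [Nat.succ_mul] at h1
        linarith
      · convert hM2 using 2
        · simp [rep_add, List.append_assoc]
        · simp
    · -- V₂ ≠ []
      obtain ⟨q, m, v₁, v₂, hv12, hkq, hV₁, hV₂⟩ :=
        prefix_split hv hsplit.symm hV2
      subst hv12; subst hV₁
      rw [hV₂] at hM
      rw [zeq] at hM
      have hmq : m + q + 1 = k := by omega
      rw [hmq, rep_rep] at hM
      refine ⟨v₁, v₂, q + E₁ * k, E₂ * k, rfl, ?_, ?_⟩
      · have h1 : (E₁ + 1) * k ≤ E₂ * k := Nat.mul_le_mul_right k hE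
        rw [Nat.succ_mul] at h1
        have hq : q < k := by omega
        linarith
      · convert hM using 2
        · simp only [List.append_assoc]
          rw [seq_eq']
        · rw [rep_rep, Nat.mul_comm]
  · rintro ⟨v₁, v₂, e₁, e₂, hv12, he, hM⟩
    subst hv12
    have hz : (v₂ ++ v₁ : List A) ≠ [] := by
      intro h
      obtain ⟨h1, h2⟩ := List.append_eq_nil_iff.mp h
      exact hv (by rw [h1, h2]; rfl)
    have hM2 := boost hclose hM (rep_ne_nil hz (by omega)) (show 2 ≤ k by omega)
    rw [rep_rep] at hM2
    have hqk : e₁ % k < k := Nat.mod_lt _ (by omega)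
    refine ⟨rep (e₁ % k) (v₁ ++ v₂) ++ v₁, v₂ ++ rep (k - 1 - e₁ % k) (v₁ ++ v₂),
      e₁ / k, e₂, ?_, ?_, ?_⟩
    · have h := veq v₁ v₂ (e₁ % k) (k - 1 - e₁ % k)
      rw [show e₁ % k + (k - 1 - e₁ % k) + 1 = k from by omega] at h
      exact h
    · exact Nat.lt_of_le_of_lt (Nat.div_le_self e₁ k) he
    · rw [zeq, show (k - 1 - e₁ % k) + e₁ % k + 1 = k from by omega]
      convert hM2 using 2
      · simp only [List.append_assoc]
        rw [rep_rep, seq_eq', Nat.mod_add_div']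
      · rw [rep_rep, Nat.mul_comm]

lemma Q_g1 (u w : List A) (a : A) :
    QL Lτ (u ++ [a]) (w ++ [a]) ↔ QL Lτ u (a :: w) := by
  constructor
  · rintro ⟨V₁, V₂, E₁, E₂, hsplit, hE, hM⟩
    rcases V₂.eq_nil_or_concat with rfl | ⟨s, c, rfl⟩
    · -- V₂ = []
      rw [List.append_nil] at hsplit
      subst hsplit
      simp only [List.nil_append, List.append_nil] at hM
      -- hM : (u ++ [a] ++ (w ++ [a]) ++ rep E₁ (w ++ [a]), rep E₂ (w ++ [a])) ∈ Lτ
      by_cases hE2 : E₁ + 2 ≤ E₂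
      · refine ⟨[a], w, E₁ + 1, E₂, by simp, by omega, ?_⟩
        convert hM using 2
        simp [rep_succ, List.append_assoc]
      · have hne : rep E₂ (w ++ [a]) ≠ [] := rep_ne_nil (by simp) (by omega)
        have hM2 := boost hclose hM hne (le_refl 2)
        rw [rep_rep] at hM2
        refine ⟨[a], w, E₁ + 1, 2 * E₂, by simp, by omega, ?_⟩
        convert hM2 using 2
        simp [rep_succ, List.append_assoc]
    · -- V₂ = s ++ [c]
      rw [List.concat_eq_append] at hsplit hM
      rw [← List.append_assoc] at hsplit
      obtain ⟨hw, hc⟩ := List.append_inj' hsplit rfl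
      have hca : c = a := by simpa using hc.symm
      subst hw
      rw [hca] at hM
      refine ⟨a :: V₁, s, E₁, E₂, by simp, hE, ?_⟩
      convert hM using 2 <;> simp [List.append_assoc]
  · rintro ⟨v₁, v₂, e₁, e₂, hsplit, he, hM⟩
    rcases v₁ with _ | ⟨b, p⟩
    · -- v₁ = []
      rw [List.nil_append] at hsplit
      subst hsplit
      simp only [List.append_nil, List.nil_append] at hM
      rcases e₁ with _ | e₁'
      · -- e₁ = 0
        simp only [rep_zero, List.append_nil] at hM
        obtain ⟨m, rfl⟩ : ∃ m, e₂ = m + 1 := ⟨e₂ - 1, by omega⟩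
        rw [rep_succ] at hM
        have hM' : (u, a :: (w ++ rep m (a :: w))) ∈ Lτ := by
          simpa using hM
        have hM2 := rot hclose hM'
        refine ⟨[], w ++ [a], 0, m + 1, by simp, by omega, ?_⟩
        convert hM2 using 2
        · simp
        · simp only [List.append_nil]
          rw [← rep_wrap]
          simp [List.append_assoc]
      · -- e₁ = e₁' + 1
        refine ⟨w, [a], e₁', e₂, rfl, by omega, ?_⟩
        convert hM using 2 <;> simp [rep_succ, List.append_assoc]
    · -- v₁ = b :: p, b = a
      rw [List.cons_append] at hsplit
      obtain ⟨rfl, rfl⟩ : b = a ∧ w = p ++ v₂ := by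
        injection hsplit with h1 h2
        exact ⟨h1.symm, h2⟩
      refine ⟨p, v₂ ++ [b], e₁, e₂, by simp, he, ?_⟩
      convert hM using 2 <;> simp [List.append_assoc]

end Main
end GammaAux

namespace GammaAux
open Computability
variable {A : Type}

lemma spoke_eq (u v₁ v₂ : List A) (e : ℕ) :
    u ++ rep e (v₁ ++ v₂) ++ v₁ = u ++ v₁ ++ rep e (v₂ ++ v₁) := by
  rw [List.append_assoc, rep_conj, List.append_assoc]

lemma loop_eq (v₁ v₂ : List A) (m : ℕ) :
    v₂ ++ rep m (v₁ ++ v₂) ++ v₁ = rep (m + 1) (v₂ ++ v₁) := by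
  rw [List.append_assoc, rep_wrap]

theorem main {n : ℕ} {t r : Fin n → RExp A}
    (Lτ LΓ : Set (List A × List A))
    (hLτ : ∀ a b, ((a, b) ∈ Lτ ↔ ∃ i, a ∈ (t i).lang ∧ b ∈ (r i).lang ∧ b ≠ []))
    (hLΓ : ∀ u v, ((u, v) ∈ LΓ ↔ v ≠ [] ∧ ∃ (i : Fin n) (k : ℕ) (x y : List A), 1 ≤ k ∧ rep k v = x ++ y ∧
        u ++ x ∈ (t i).lang ∧ y ++ x ∈ (r i).lang))
    (hclose : ∀ x y, GammaStep x y → y ∈ Lτ → x ∈ Lτ) :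
    (∀ x y, Relation.EqvGen GammaStep x y → (x ∈ LΓ ↔ y ∈ LΓ)) ∧
    (∀ u v : List A, v ≠ [] → ((u, v) ∈ LΓ ↔ ∃ (k₁ k₂ : ℕ) (v₁ v₂ : List A),
        v = v₁ ++ v₂ ∧
        (u ++ rep k₁ v ++ v₁, v₂ ++ rep (k₂ + k₁) v ++ v₁) ∈ Lτ)) := by
  have hQ : ∀ u v, v ≠ [] → ((u, v) ∈ LΓ ↔ QL Lτ u v) := by
    intro u v hv
    constructor
    · intro h
      obtain ⟨-, i, k, x, y, hk, hxy, hux, hyx⟩ := (hLΓ u v).1 h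
      by_cases hy : y = []
      · subst hy
        rw [List.append_nil] at hxy
        subst hxy
        have hM : (u ++ rep k v, rep k v) ∈ Lτ :=
          (hLτ _ _).2 ⟨i, hux, by simpa using hyx, rep_ne_nil hv hk⟩
        have hM2 := boost hclose hM (rep_ne_nil hv hk) (le_refl 2)
        rw [rep_rep] at hM2
        refine ⟨[], v, k, 2 * k, by simp, by omega, ?_⟩
        convert hM2 using 2 <;> simp
      · have hM : (u ++ x, y ++ x) ∈ Lτ :=
          (hLτ _ _).2 ⟨i, hux, hyx, fun hnil => hy (List.append_eq_nil_iff.mp hnil).1⟩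
        obtain ⟨q, m, v₁, v₂, hv12, hkqm, hx, hy'⟩ := prefix_split hv hxy.symm hy
        subst hv12; subst hx; subst hy'
        refine ⟨v₁, v₂, q, m + q + 1, rfl, by omega, ?_⟩
        convert hM using 2
        · rw [← spoke_eq, List.append_assoc]
        · rw [← zeq]
    · rintro ⟨v₁, v₂, e₁, e₂, hv12, he, hM⟩
      obtain ⟨i, h1, h2, -⟩ := (hLτ _ _).1 hM
      obtain ⟨m, rfl⟩ : ∃ m, e₂ = e₁ + m + 1 := ⟨e₂ - e₁ - 1, by omega⟩
      refine (hLΓ u v).2 ⟨hv, i, e₁ + m + 1, rep e₁ v ++ v₁, v₂ ++ rep m v, by omega,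
        ?_, ?_, ?_⟩
      · rw [hv12]
        exact veq v₁ v₂ e₁ m
      · rw [hv12, ← List.append_assoc, spoke_eq]
        exact h1
      · rw [hv12, zeq, show m + e₁ + 1 = e₁ + m + 1 from by omega]
        exact h2
  have hstep : ∀ x y, GammaStep x y → (x ∈ LΓ ↔ y ∈ LΓ) := by
    intro x y hxy
    cases hxy with
    | g1 u w a =>
      rw [hQ u (a :: w) (by simp), hQ (u ++ [a]) (w ++ [a]) (by simp)]
      exact Q_g1 hclose u w a
    | g2 u v k hk hv =>
      rw [hQ u v hv, hQ u (rep k v) (rep_ne_nil hv (by omega))]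
      exact Q_g2 hclose u v hv k hk
  constructor
  · intro x y h
    induction h with
    | rel x y h => exact hstep x y h
    | refl x => exact Iff.rfl
    | symm x y _ ih => exact ih.symm
    | trans x y z _ _ ih1 ih2 => exact ih1.trans ih2
  · intro u v hv
    rw [hQ u v hv]
    constructor
    · rintro ⟨v₁, v₂, e₁, e₂, rfl, he, hM⟩
      obtain ⟨m, rfl⟩ : ∃ m, e₂ = e₁ + m + 1 := ⟨e₂ - e₁ - 1, by omega⟩
      refine ⟨e₁, m, v₁, v₂, rfl, ?_⟩
      convert hM using 2
      · rw [spoke_eq]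
      · rw [loop_eq, show m + e₁ + 1 = e₁ + m + 1 from by omega]
    · rintro ⟨k₁, k₂, v₁, v₂, rfl, hM⟩
      refine ⟨v₁, v₂, k₁, k₂ + k₁ + 1, rfl, by omega, ?_⟩
      convert hM using 2
      · rw [spoke_eq]
      · rw [loop_eq]
end GammaAux

/-- For `τ = ∑ᵢ tᵢ·rᵢ°` in disjunctive form, let
`Γ(τ) = ∑ᵢ ∑_{(t₀,t₁)∈∇_{tᵢ}, (s₀,s₁)∈∇_{rᵢ}} t₀·(√((t₁ ⊓ s₁)·s₀))°`
(formalised at the level of lasso languages).  If `⟦τ⟧∘` is closed under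
γ-expansion, then `⟦Γ(τ)⟧∘` is ∼_γ-saturated; moreover `(u,v) ∈ ⟦Γ(τ)⟧∘` iff
there are `k₁, k₂ ≥ 0` and `v₁, v₂` with `v = v₁v₂` and
`(u v^{k₁} v₁, v₂ v^{k₂+k₁} v₁) ∈ ⟦τ⟧∘`. -/
theorem gamma_map_saturates (A : Type) [Fintype A]
    (n : ℕ) (t r : Fin n → RExp A) (hr : ∀ i, [] ∉ (r i).lang) :
    let Lτ : Set (List A × List A) :=
      ⋃ i : Fin n, lprod (t i).lang (circSet (r i).lang)
    let LΓ : Set (List A × List A) :=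
      ⋃ i : Fin n, ⋃ p ∈ {p | p ∈ nabla (t i)}, ⋃ q ∈ {q | q ∈ nabla (r i)},
        lprod p.1.lang (circSet (rootLang ((p.2.lang ⊓ q.2.lang) * q.1.lang)))
    (∀ x y, GammaStep x y → y ∈ Lτ → x ∈ Lτ) →
      (∀ x y, Relation.EqvGen GammaStep x y → (x ∈ LΓ ↔ y ∈ LΓ)) ∧
      (∀ u v : List A, v ≠ [] →
        ((u, v) ∈ LΓ ↔ ∃ (k₁ k₂ : ℕ) (v₁ v₂ : List A), v = v₁ ++ v₂ ∧
          (u ++ (List.replicate k₁ v).flatten ++ v₁,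
           v₂ ++ (List.replicate (k₂ + k₁) v).flatten ++ v₁) ∈ Lτ)) := by
  intro Lτ LΓ hclose
  have hLτ : ∀ a b, ((a, b) ∈ Lτ ↔ ∃ i, a ∈ (t i).lang ∧ b ∈ (r i).lang ∧ b ≠ []) := by
    intro a b
    simp only [Lτ, Set.mem_iUnion]
    constructor
    · rintro ⟨i, u₀, v', w', hu, ⟨hv', hw, hne⟩, heq⟩
      obtain ⟨h1, h2⟩ := Prod.mk.injEq _ _ _ _ ▸ heq
      simp only at hv'
      subst hv'
      rw [List.append_nil] at h1
      subst h1; subst h2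
      exact ⟨i, hu, hw, hne⟩
    · rintro ⟨i, ha, hb, hne⟩
      exact ⟨i, a, [], b, ha, ⟨rfl, hb, hne⟩, by simp⟩
  have hLΓ : ∀ u v, ((u, v) ∈ LΓ ↔ v ≠ [] ∧
      ∃ (i : Fin n) (k : ℕ) (x y : List A), 1 ≤ k ∧
        GammaAux.rep k v = x ++ y ∧
        u ++ x ∈ (t i).lang ∧ y ++ x ∈ (r i).lang) := by
    intro u v
    simp only [LΓ, Set.mem_iUnion, Set.mem_setOf_eq]
    constructor
    · rintro ⟨i, p, hp, q, hq, u₀, v', w', hu, ⟨hv', hw, hne⟩, heq⟩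
      obtain ⟨h1, h2⟩ := Prod.mk.injEq _ _ _ _ ▸ heq
      simp only at hv'
      subst hv'
      rw [List.append_nil] at h1
      subst h1; subst h2
      obtain ⟨hvne, k, hk, hrep⟩ := hw
      obtain ⟨x, hx, y, hy, hxy⟩ := Language.mem_mul.mp hrep
      have hx1 : x ∈ p.2.lang := hx.1
      have hx2 : x ∈ q.2.lang := hx.2
      refine ⟨hvne, i, k, x, y, hk, hxy.symm, ?_, ?_⟩
      · exact GammaAux.nabla_sound (t i) p hp u x hu hx1
      · exact GammaAux.nabla_sound (r i) q hq y x hy hx2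
    · rintro ⟨hv, i, k, x, y, hk, hxy, hux, hyx⟩
      obtain ⟨p, hp, hup, hxp⟩ := GammaAux.nabla_complete (t i) u x hux
      obtain ⟨q, hq, hyq, hxq⟩ := GammaAux.nabla_complete (r i) y x hyx
      refine ⟨i, p, hp, q, hq, u, [], v, hup, ⟨rfl, ⟨hv, k, hk, ?_⟩, hv⟩, by simp⟩
      show GammaAux.rep k v ∈ (p.2.lang ⊓ q.2.lang) * q.1.lang
      rw [hxy]
      exact Language.append_mem_mul (show x ∈ p.2.lang ⊓ q.2.lang from ⟨hxp, hxq⟩) hyq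
  exact GammaAux.main Lτ LΓ hLτ hLΓ hclose
end
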